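/- arXiv:1603.01743 — 2 statements merged into one kernel-verified Lean document; each statement's English description precedes it below -/
import Mathlib

section
/- Let 0 < β < 1/2 and let ε > 0 be sufficiently small. Fix z₀ ∈ ℂ with z₀ ≠ 0 and set r₀ = ε|z₀|. Then there exists a constant c(ε) > 0 such that for all z₁, z₂ ∈ B(z₀, r₀), one has ||z₁|^{β-1} z₁ - |z₂|^{β-1} z₂| ≥ c(ε) · r₀^{β-1} · |z₁ - z₂|. In particular, on B(z₀, r₀) the Euclidean distance and the pulled-back distance |ξ(z₁) - ξ(z₂)| (with ξ(z) = |z|^{β-1} z) are equivalent up to the factor r₀^{β-1}. -/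
/-!
The map `ξ(z) = |z|^(β-1) z` is inverted by `w ↦ |w|^(1/β - 1) w`, whose exponent
`γ = 1/β - 1` is nonnegative. Such a map is Lipschitz on the ball of radius `M` with constant
`(1 + γ) M^γ`: for `|b| ≤ |a|` split `|a|^γ a - |b|^γ b = |a|^γ (a - b) + (|a|^γ - |b|^γ) b` and
bound the second term by `(A^γ - B^γ) B ≤ γ A^γ (A - B)`. Points of `B(z₀, ε|z₀|)` with `ε ≤ 1`
are nonzero of modulus at most `2|z₀|`, so the Lipschitz bound for the inverse on the image gives
the claim with `c(ε) = β (ε/2)^(1-β)`.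
-/

open Metric

theorem Real.rpow_sub_rpow_mul_le {γ A B : ℝ} (hγ : 0 ≤ γ) (hB : 0 ≤ B) (hBA : B ≤ A) :
    (A ^ γ - B ^ γ) * B ≤ γ * A ^ γ * (A - B) := by
  rcases hB.eq_or_lt with rfl | hB
  · simp only [mul_zero, sub_zero]
    have hA : 0 ≤ A := hBA
    positivity
  have hA : 0 < A := hB.trans_le hBA
  have hlog : A ^ γ - B ^ γ ≤ γ * A ^ γ * Real.log (A / B) := by
    rw [Real.rpow_def_of_pos hA, Real.rpow_def_of_pos hB, Real.log_div hA.ne' hB.ne']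
    have hexp : Real.exp (Real.log B * γ)
        = Real.exp (Real.log A * γ) * Real.exp (Real.log B * γ - Real.log A * γ) := by
      rw [← Real.exp_add, add_sub_cancel]
    -- convexity of `exp`: `exp y ≥ exp x * (1 + (y - x))`
    rw [hexp]
    nlinarith [Real.exp_pos (Real.log A * γ),
      Real.add_one_le_exp (Real.log B * γ - Real.log A * γ)]
  have hlog_mul : Real.log (A / B) * B ≤ A - B := by
    calc Real.log (A / B) * B ≤ (A / B - 1) * B := by
          gcongr; exact Real.log_le_sub_one_of_pos (div_pos hA hB)
      _ = A - B := by field_simp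
  calc (A ^ γ - B ^ γ) * B ≤ γ * A ^ γ * Real.log (A / B) * B := by gcongr
    _ ≤ γ * A ^ γ * (A - B) := by rw [mul_assoc]; gcongr

section RadialPow

variable {E : Type*} [NormedAddCommGroup E] [NormedSpace ℝ E]

noncomputable def radialPow (γ : ℝ) (x : E) : E := ‖x‖ ^ γ • x

theorem norm_radialPow (γ : ℝ) {x : E} (hx : x ≠ 0) : ‖radialPow γ x‖ = ‖x‖ ^ (γ + 1) := by
  rw [radialPow, norm_smul_of_nonneg (by positivity), Real.rpow_add_one (norm_ne_zero_iff.mpr hx)]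

theorem radialPow_radialPow {γ δ : ℝ} (h : (γ + 1) * (δ + 1) = 1) {x : E} (hx : x ≠ 0) :
    radialPow δ (radialPow γ x) = x := by
  have hx' : 0 < ‖x‖ := norm_pos_iff.mpr hx
  rw [radialPow, norm_radialPow γ hx, radialPow, smul_smul, ← Real.rpow_mul hx'.le,
    ← Real.rpow_add hx']
  convert one_smul ℝ x
  convert Real.rpow_zero ‖x‖ using 2
  linear_combination h

theorem norm_radialPow_sub_le {γ M : ℝ} (hγ : 0 ≤ γ) {a b : E} (ha : ‖a‖ ≤ M) (hb : ‖b‖ ≤ M) :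
    ‖radialPow γ a - radialPow γ b‖ ≤ (1 + γ) * M ^ γ * ‖a - b‖ := by
  wlog hba : ‖b‖ ≤ ‖a‖ generalizing a b
  · rw [norm_sub_rev, norm_sub_rev a]
    exact this hb ha (le_of_not_ge hba)
  have hsplit : radialPow γ a - radialPow γ b
      = ‖a‖ ^ γ • (a - b) + (‖a‖ ^ γ - ‖b‖ ^ γ) • b := by
    simp only [radialPow, smul_sub, sub_smul]; abel
  have hpow : ‖a‖ ^ γ ≤ M ^ γ := by gcongr
  have hdiff : 0 ≤ ‖a‖ ^ γ - ‖b‖ ^ γ := sub_nonneg.mpr (by gcongr)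
  calc ‖radialPow γ a - radialPow γ b‖
      ≤ ‖a‖ ^ γ * ‖a - b‖ + (‖a‖ ^ γ - ‖b‖ ^ γ) * ‖b‖ := by
        rw [hsplit]
        refine (norm_add_le _ _).trans_eq ?_
        rw [norm_smul_of_nonneg (by positivity), norm_smul_of_nonneg hdiff]
    _ ≤ ‖a‖ ^ γ * ‖a - b‖ + γ * ‖a‖ ^ γ * (‖a‖ - ‖b‖) :=
        add_le_add le_rfl (Real.rpow_sub_rpow_mul_le hγ (norm_nonneg b) hba)
    _ ≤ ‖a‖ ^ γ * ‖a - b‖ + γ * ‖a‖ ^ γ * ‖a - b‖ := by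
        gcongr; exact norm_sub_norm_le a b
    _ = (1 + γ) * ‖a‖ ^ γ * ‖a - b‖ := by ring
    _ ≤ (1 + γ) * M ^ γ * ‖a - b‖ := by gcongr

/-- `radialPow γ` is inverted by `radialPow ((γ + 1)⁻¹ - 1)`, whose exponent is nonnegative. -/
theorem mul_rpow_mul_norm_sub_le_norm_radialPow_sub {γ R : ℝ} (hγ₀ : -1 < γ) (hγ₁ : γ ≤ 0)
    {a b : E} (ha₀ : a ≠ 0) (hb₀ : b ≠ 0) (ha : ‖a‖ ≤ R) (hb : ‖b‖ ≤ R) :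
    (γ + 1) * R ^ γ * ‖a - b‖ ≤ ‖radialPow γ a - radialPow γ b‖ := by
  have hγ1 : 0 < γ + 1 := by linarith
  have hR : 0 < R := (norm_pos_iff.mpr ha₀).trans_le ha
  set δ := (γ + 1)⁻¹ - 1
  have hδ : 0 ≤ δ := sub_nonneg.mpr (one_le_inv₀ hγ1 |>.mpr (by linarith))
  have hinv : (γ + 1) * (δ + 1) = 1 := by rw [sub_add_cancel, mul_inv_cancel₀ hγ1.ne']
  have himage : ∀ x : E, x ≠ 0 → ‖x‖ ≤ R → ‖radialPow γ x‖ ≤ R ^ (γ + 1) := fun x hx hxR => by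
    rw [norm_radialPow γ hx]; gcongr
  have hlip := norm_radialPow_sub_le hδ (himage a ha₀ ha) (himage b hb₀ hb)
  rw [radialPow_radialPow hinv ha₀, radialPow_radialPow hinv hb₀, ← Real.rpow_mul hR.le,
    add_sub_cancel, show (γ + 1) * δ = -γ by linear_combination hinv, Real.rpow_neg hR.le,
    ← mul_inv] at hlip
  exact (le_inv_mul_iff₀ (by positivity)).mp hlip

end RadialPow

theorem ne_zero_and_norm_le_of_mem_ball {E : Type*} [SeminormedAddGroup E] {z z₀ : E} {ε : ℝ}
    (hε : ε ≤ 1) (hz : z ∈ ball z₀ (ε * ‖z₀‖)) : z ≠ 0 ∧ ‖z‖ ≤ 2 * ‖z₀‖ := by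
  have hlt := norm_lt_of_mem_ball hz
  constructor
  · rintro rfl
    rw [mem_ball, dist_zero_left] at hz
    nlinarith [norm_nonneg z₀]
  · nlinarith [norm_nonneg z₀]

/-- Lower bi-Lipschitz bound for the conic coordinate change `ξ(z) = |z|^(β-1) z`
on balls `B(z₀, ε|z₀|)`, for ε sufficiently small. -/
theorem stmt_1 (β : ℝ) (hβ₀ : 0 < β) (hβ₁ : β < 1/2) :
    ∃ ε₀ : ℝ, 0 < ε₀ ∧ ∀ ε : ℝ, 0 < ε → ε ≤ ε₀ → ∀ z₀ : ℂ, z₀ ≠ 0 →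
      ∃ c : ℝ, 0 < c ∧ ∀ z₁ z₂ : ℂ,
        z₁ ∈ ball z₀ (ε * ‖z₀‖) → z₂ ∈ ball z₀ (ε * ‖z₀‖) →
        c * (ε * ‖z₀‖) ^ (β - 1) * ‖z₁ - z₂‖
          ≤ ‖((‖z₁‖ ^ (β - 1) : ℝ) : ℂ) * z₁
              - ((‖z₂‖ ^ (β - 1) : ℝ) : ℂ) * z₂‖ := by
  refine ⟨1, one_pos, fun ε hε hε₁ z₀ hz₀ => ⟨β * (ε / 2) ^ (1 - β), by positivity, ?_⟩⟩
  intro z₁ z₂ h₁ h₂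
  obtain ⟨hz₁, hz₁r⟩ := ne_zero_and_norm_le_of_mem_ball hε₁ h₁
  obtain ⟨hz₂, hz₂r⟩ := ne_zero_and_norm_le_of_mem_ball hε₁ h₂
  have hscale : β * (ε / 2) ^ (1 - β) * (ε * ‖z₀‖) ^ (β - 1) = β * (2 * ‖z₀‖) ^ (β - 1) := by
    rw [show ε * ‖z₀‖ = ε / 2 * (2 * ‖z₀‖) by ring, Real.mul_rpow (by positivity) (by positivity),
      ← mul_assoc, mul_assoc β, ← Real.rpow_add (by positivity), sub_add_sub_cancel', sub_self,
      Real.rpow_zero, mul_one]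
  rw [hscale]
  simpa only [sub_add_cancel, radialPow, Complex.real_smul] using
    mul_rpow_mul_norm_sub_le_norm_radialPow_sub (γ := β - 1) (by linarith) (by linarith)
      hz₁ hz₂ hz₁r hz₂r
end

section
/- Let 0 < β < 1/2, 0 < α < 1 with αβ < 1 - 2β. Suppose w is smooth on the punctured disk and satisfies the gradient bound |∂_z w(z)| ≤ M|z|^{2β-1+αβ} and the interior Schauder consequence r₀^α [∂²_z w]_{C^α(B(z₀,r₀))} + sup_{B(z₀,r₀)} |∂²_z w| ≤ M r₀^{2β-2+αβ} with r₀ = ε|z₀|. Then there exists C with | |z₀|^{2-2β} ∂²_z w(z₀) - |z₁|^{2-2β} ∂²_z w(z₁) | ≤ C M |ξ₀ - ξ₁|^α for all z₁ ∈ B(z₀, r₀), where ξᵢ = |zᵢ|^{β-1} zᵢ. -/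
open Metric Real

/-- The Wirtinger derivative `∂_z = (∂_x - i ∂_y)/2` of a real-valued function on ℂ. -/
noncomputable def dz (w : ℂ → ℝ) (z : ℂ) : ℂ :=
  (1 / 2 : ℂ) * (((fderiv ℝ w z 1 : ℝ) : ℂ) - Complex.I * ((fderiv ℝ w z Complex.I : ℝ) : ℂ))

/-- The Wirtinger derivative `∂_z` of a complex-valued function on ℂ. -/
noncomputable def dzC (g : ℂ → ℂ) (z : ℂ) : ℂ :=
  (1 / 2 : ℂ) * (fderiv ℝ g z 1 - Complex.I * fderiv ℝ g z Complex.I)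

lemma rpow_sub_rpow_le {a b p : ℝ} (ha : 0 ≤ a) (hab : a ≤ b) (hp : 1 ≤ p) :
    b ^ p - a ^ p ≤ p * b ^ (p - 1) * (b - a) := by
  rcases eq_or_lt_of_le (ha.trans hab) with hb | hb
  · have ha0 : a = 0 := le_antisymm (hab.trans hb.symm.le) ha
    have hb0 : b = 0 := hb.symm
    have hp0 : p ≠ 0 := by linarith
    simp [ha0, hb0, Real.zero_rpow hp0]
  · have hs : (-1 : ℝ) ≤ a / b - 1 := by
      have : 0 ≤ a / b := div_nonneg ha hb.le
      linarith
    have hbern := one_add_mul_self_le_rpow_one_add hs hp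
    rw [show (1 : ℝ) + (a / b - 1) = a / b by ring, Real.div_rpow ha hb.le] at hbern
    have hB : b ^ p = b ^ (p - 1) * b := by
      rw [Real.rpow_sub_one hb.ne' p]; field_simp
    have hBpos : 0 < b ^ p := Real.rpow_pos_of_pos hb p
    have hB1 : 0 ≤ b ^ (p - 1) := (Real.rpow_pos_of_pos hb _).le
    have h2 : (1 + p * (a / b - 1)) * b ^ p ≤ a ^ p := by
      have := mul_le_mul_of_nonneg_right hbern hBpos.le
      rwa [div_mul_cancel₀ _ hBpos.ne'] at this
    have hab' : a / b * b ^ p = a * b ^ (p - 1) := by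
      rw [hB]; field_simp
    nlinarith [h2, hB, hBpos]

lemma abs_rpow_sub_rpow_le {a b p : ℝ} (ha : 0 ≤ a) (hb : 0 ≤ b) (hp : 1 ≤ p) :
    |a ^ p - b ^ p| ≤ p * max a b ^ (p - 1) * |a - b| := by
  rcases le_total a b with h | h
  · rw [abs_sub_comm, abs_of_nonneg (sub_nonneg.2 (Real.rpow_le_rpow ha h (by linarith))),
      abs_sub_comm, abs_of_nonneg (sub_nonneg.2 h), max_eq_right h]
    exact rpow_sub_rpow_le ha h hp
  · rw [abs_of_nonneg (sub_nonneg.2 (Real.rpow_le_rpow hb h (by linarith))),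
      abs_of_nonneg (sub_nonneg.2 h), max_eq_left h]
    exact rpow_sub_rpow_le hb h hp

lemma key_lip (x y : ℂ) (γ : ℝ) (hγ : 1 ≤ γ) :
    ‖((‖x‖ ^ γ : ℝ) : ℂ) * x - ((‖y‖ ^ γ : ℝ) : ℂ) * y‖
      ≤ (1 + γ) * max (‖x‖) (‖y‖) ^ γ * ‖x - y‖ := by
  have hax : 0 ≤ ‖x‖ := norm_nonneg x
  have hay : 0 ≤ ‖y‖ := norm_nonneg y
  have hdecomp : ((‖x‖ ^ γ : ℝ) : ℂ) * x - ((‖y‖ ^ γ : ℝ) : ℂ) * y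
      = ((‖x‖ ^ γ : ℝ) : ℂ) * (x - y)
        + (((‖x‖ ^ γ - ‖y‖ ^ γ : ℝ)) : ℂ) * y := by
    push_cast; ring
  rw [hdecomp]
  refine (norm_add_le _ _).trans ?_
  rw [norm_mul, norm_mul, Complex.norm_real, Complex.norm_real, Real.norm_eq_abs, Real.norm_eq_abs,
    abs_of_nonneg (Real.rpow_nonneg hax γ)]
  have hmax : 0 ≤ max (‖x‖) (‖y‖) := le_max_of_le_left hax
  have h1 : ‖x‖ ^ γ ≤ max (‖x‖) (‖y‖) ^ γ :=
    Real.rpow_le_rpow hax (le_max_left _ _) (by linarith)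
  have h2 : |‖x‖ ^ γ - ‖y‖ ^ γ| * ‖y‖
      ≤ γ * max (‖x‖) (‖y‖) ^ γ * ‖x - y‖ := by
    have := abs_rpow_sub_rpow_le hax hay hγ
    have habs : |‖x‖ - ‖y‖| ≤ ‖x - y‖ :=
      abs_norm_sub_norm_le x y
    have hmono : γ * max (‖x‖) (‖y‖) ^ (γ - 1) * |‖x‖ - ‖y‖|
        * ‖y‖ ≤ γ * max (‖x‖) (‖y‖) ^ (γ - 1)
        * ‖x - y‖ * max (‖x‖) (‖y‖) := by
      have hg0 : (0:ℝ) ≤ γ := by linarith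
      have hm1 : 0 ≤ max (‖x‖) (‖y‖) ^ (γ - 1) := Real.rpow_nonneg hmax _
      apply mul_le_mul (by
        apply mul_le_mul_of_nonneg_left habs (by positivity)) (le_max_right _ _) hay
      positivity
    calc |‖x‖ ^ γ - ‖y‖ ^ γ| * ‖y‖
        ≤ γ * max (‖x‖) (‖y‖) ^ (γ - 1) * |‖x‖ - ‖y‖|
          * ‖y‖ := by
          apply mul_le_mul_of_nonneg_right this hay
      _ ≤ γ * max (‖x‖) (‖y‖) ^ (γ - 1) * ‖x - y‖
          * max (‖x‖) (‖y‖) := hmono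
      _ = γ * (max (‖x‖) (‖y‖) ^ (γ - 1)
          * max (‖x‖) (‖y‖)) * ‖x - y‖ := by ring
      _ = γ * max (‖x‖) (‖y‖) ^ γ * ‖x - y‖ := by
          rcases eq_or_lt_of_le hmax with hm | hm
          · rw [← hm, Real.zero_rpow (show γ ≠ 0 by linarith)]
            ring
          · rw [← Real.rpow_add_one hm.ne' (γ - 1), sub_add_cancel]
  have hfirst : ‖x‖ ^ γ * ‖x - y‖
      ≤ max (‖x‖) (‖y‖) ^ γ * ‖x - y‖ :=
    mul_le_mul_of_nonneg_right h1 (norm_nonneg _)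
  nlinarith [h2, hfirst]

lemma bilip {β : ℝ} (hβ₀ : 0 < β) (hβ₁ : β < 1/2) {z₀ z₁ : ℂ} (h0 : z₀ ≠ 0) (h1 : z₁ ≠ 0)
    (hub : ‖z₁‖ ≤ 3/2 * ‖z₀‖) :
    ‖z₀‖ ^ (β - 1) * ‖z₀ - z₁‖
      ≤ 3 / (2*β) * ‖((‖z₀‖ ^ (β - 1) : ℝ) : ℂ) * z₀
          - ((‖z₁‖ ^ (β - 1) : ℝ) : ℂ) * z₁‖ := by
  set a := ‖z₀‖ with ha_def
  set b := ‖z₁‖ with hb_def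
  have ha : 0 < a := norm_pos_iff.mpr h0
  have hb : 0 < b := norm_pos_iff.mpr h1
  set γ : ℝ := (1-β)/β with hγ_def
  have hγ : 1 ≤ γ := by rw [hγ_def, le_div_iff₀ hβ₀]; linarith
  set ξ₀ : ℂ := ((a ^ (β-1) : ℝ) : ℂ) * z₀ with hξ₀_def
  set ξ₁ : ℂ := ((b ^ (β-1) : ℝ) : ℂ) * z₁ with hξ₁_def
  have habs0 : ‖ξ₀‖ = a ^ β := by
    rw [hξ₀_def, norm_mul, Complex.norm_real, Real.norm_eq_abs, abs_of_nonneg (Real.rpow_nonneg ha.le _),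
      ← ha_def, ← Real.rpow_add_one ha.ne' (β-1)]
    norm_num
  have habs1 : ‖ξ₁‖ = b ^ β := by
    rw [hξ₁_def, norm_mul, Complex.norm_real, Real.norm_eq_abs, abs_of_nonneg (Real.rpow_nonneg hb.le _),
      ← hb_def, ← Real.rpow_add_one hb.ne' (β-1)]
    norm_num
  have hβγ : β * γ = 1 - β := by rw [hγ_def]; field_simp
  have hrec0 : ((‖ξ₀‖ ^ γ : ℝ) : ℂ) * ξ₀ = z₀ := by
    rw [habs0, ← Real.rpow_mul ha.le, hβγ, hξ₀_def, ← mul_assoc, ← Complex.ofReal_mul,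
      ← Real.rpow_add ha]
    norm_num
  have hrec1 : ((‖ξ₁‖ ^ γ : ℝ) : ℂ) * ξ₁ = z₁ := by
    rw [habs1, ← Real.rpow_mul hb.le, hβγ, hξ₁_def, ← mul_assoc, ← Complex.ofReal_mul,
      ← Real.rpow_add hb]
    norm_num
  have hkey := key_lip ξ₀ ξ₁ γ hγ
  rw [hrec0, hrec1] at hkey
  have hmaxle : max (‖ξ₀‖) (‖ξ₁‖) ≤ ((3/2)*a) ^ β := by
    rw [habs0, habs1]
    exact max_le (Real.rpow_le_rpow ha.le (by linarith) hβ₀.le)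
      (Real.rpow_le_rpow hb.le hub hβ₀.le)
  have hmaxγ : max (‖ξ₀‖) (‖ξ₁‖) ^ γ ≤ (3/2) * a ^ (1-β) := by
    calc max (‖ξ₀‖) (‖ξ₁‖) ^ γ ≤ (((3/2)*a) ^ β) ^ γ :=
          Real.rpow_le_rpow (le_max_of_le_left (norm_nonneg _)) hmaxle (by linarith)
      _ = ((3/2)*a) ^ (β*γ) := (Real.rpow_mul (by positivity) β γ).symm
      _ = (3/2 : ℝ) ^ (1-β) * a ^ (1-β) := by
          rw [hβγ, Real.mul_rpow (by norm_num) ha.le]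
      _ ≤ (3/2 : ℝ) ^ (1:ℝ) * a ^ (1-β) := by
          apply mul_le_mul_of_nonneg_right
            (Real.rpow_le_rpow_of_exponent_le (by norm_num) (by linarith))
            (Real.rpow_nonneg ha.le _)
      _ = (3/2) * a ^ (1-β) := by rw [Real.rpow_one]
  have h1γ : 1 + γ = 1/β := by rw [hγ_def]; field_simp; ring
  have hfin : ‖z₀ - z₁‖ ≤ 3/(2*β) * a ^ (1-β) * ‖ξ₀ - ξ₁‖ := by
    calc ‖z₀ - z₁‖
        ≤ (1 + γ) * max (‖ξ₀‖) (‖ξ₁‖) ^ γ * ‖ξ₀ - ξ₁‖ := hkey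
      _ ≤ (1/β) * ((3/2) * a ^ (1-β)) * ‖ξ₀ - ξ₁‖ := by
          rw [h1γ]
          exact mul_le_mul_of_nonneg_right
            (mul_le_mul_of_nonneg_left hmaxγ (by positivity)) (norm_nonneg _)
      _ = 3/(2*β) * a ^ (1-β) * ‖ξ₀ - ξ₁‖ := by ring
  have hmul := mul_le_mul_of_nonneg_left hfin (Real.rpow_nonneg ha.le (β-1))
  have hone : a ^ (β-1) * a ^ (1-β) = 1 := by
    rw [← Real.rpow_add ha]; norm_num
  calc a ^ (β-1) * ‖z₀ - z₁‖
      ≤ a ^ (β-1) * (3/(2*β) * a ^ (1-β) * ‖ξ₀ - ξ₁‖) := hmul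
    _ = (a ^ (β-1) * a ^ (1-β)) * (3/(2*β) * ‖ξ₀ - ξ₁‖) := by ring
    _ = 3/(2*β) * ‖ξ₀ - ξ₁‖ := by rw [hone, one_mul]

set_option maxHeartbeats 2000000 in
/-- Hölder continuity in the `w`-coordinate of the weighted second derivative
`|z|^(2-2β) ∂²_z w`, given the first-derivative decay and the rescaled interior
Schauder bound on the ball `B(z₀, ε|z₀|)`. Here `ξᵢ = |zᵢ|^(β-1) zᵢ`. -/
theorem stmt_11 (β α ε : ℝ) (hβ₀ : 0 < β) (hβ₁ : β < 1/2) (hα₀ : 0 < α) (hα₁ : α < 1)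
    (hsmall : α * β < 1 - 2 * β) (hε₀ : 0 < ε) (hε₁ : ε ≤ 1/2)
    (w : ℂ → ℝ) (M : ℝ) (hM : 0 < M)
    (hsmooth : ContDiffOn ℝ (⊤ : ℕ∞) w ({0}ᶜ : Set ℂ))
    (hgrad : ∀ z : ℂ, z ≠ 0 →
      ‖dz w z‖ ≤ M * ‖z‖ ^ (2 * β - 1 + α * β)) :
    ∃ C : ℝ, 0 < C ∧ ∀ z₀ : ℂ, z₀ ≠ 0 →
      (∃ H S : ℝ,
        (∀ z₁ ∈ ball z₀ (ε * ‖z₀‖), ∀ z₂ ∈ ball z₀ (ε * ‖z₀‖),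
          ‖dzC (dz w) z₁ - dzC (dz w) z₂‖ ≤ H * ‖z₁ - z₂‖ ^ α) ∧
        (∀ z ∈ ball z₀ (ε * ‖z₀‖), ‖dzC (dz w) z‖ ≤ S) ∧
        (ε * ‖z₀‖) ^ α * H + S ≤ M * (ε * ‖z₀‖) ^ (2 * β - 2 + α * β)) →
      ∀ z₁ ∈ ball z₀ (ε * ‖z₀‖),
        ‖((‖z₀‖ ^ (2 - 2 * β) : ℝ) : ℂ) * dzC (dz w) z₀
            - ((‖z₁‖ ^ (2 - 2 * β) : ℝ) : ℂ) * dzC (dz w) z₁‖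
          ≤ C * M * ‖((‖z₀‖ ^ (β - 1) : ℝ) : ℂ) * z₀
              - ((‖z₁‖ ^ (β - 1) : ℝ) : ℂ) * z₁‖ ^ α := by
  set q : ℝ := 2 * β - 2 + α * β with hq_def
  refine ⟨3/(2*β) * (ε ^ (q - α) + 3 * ε ^ q), by positivity, ?_⟩
  rintro z₀ hz₀ ⟨H, S, hH, hS, hsum⟩ z₁ hz₁
  set g := dzC (dz w) with hg_def
  set a := ‖z₀‖ with ha_def
  set b := ‖z₁‖ with hb_def
  have ha : 0 < a := norm_pos_iff.mpr hz₀
  have hra : 0 < ε * a := by positivity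
  have hz₁d : ‖z₁ - z₀‖ < ε * a := by
    rwa [mem_ball, Complex.dist_eq] at hz₁
  set D := ‖z₀ - z₁‖ with hD_def
  have hDd : D < ε * a := by rw [hD_def, norm_sub_rev]; exact hz₁d
  have habd : |a - b| ≤ D := abs_norm_sub_norm_le z₀ z₁
  obtain ⟨hab2', hab1⟩ := abs_le.mp habd
  have hab2 : b - a ≤ D := by linarith
  have hblow : a/2 ≤ b := by nlinarith
  have hbub : b ≤ 3/2 * a := by nlinarith
  have hb : 0 < b := by linarith
  have hz₁0 : z₁ ≠ 0 := norm_pos_iff.mp hb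
  have hS0 : 0 ≤ S := le_trans (norm_nonneg _) (hS z₀ (mem_ball_self hra))
  rcases eq_or_ne z₁ z₀ with rfl | hne
  · have hba : b = a := by rw [hb_def, ha_def]
    rw [hba]
    simp [Real.zero_rpow hα₀.ne']
  · have hDpos : 0 < D := norm_pos_iff.mpr (sub_ne_zero.2 (Ne.symm hne))
    have hHd : ‖g z₀ - g z₁‖ ≤ H * D ^ α := hH z₀ (mem_ball_self hra) z₁ hz₁
    have hH0 : 0 ≤ H := by
      nlinarith [Real.rpow_pos_of_pos hDpos α, norm_nonneg (g z₀ - g z₁), hHd]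
    have hHb : H ≤ M * (ε * a) ^ (q - α) := by
      rw [Real.rpow_sub hra, ← mul_div_assoc, le_div_iff₀ (Real.rpow_pos_of_pos hra α)]
      linarith
    have hSb : S ≤ M * (ε * a) ^ q := by
      nlinarith [mul_nonneg (Real.rpow_nonneg hra.le α) hH0]
    -- split
    have hsplit : ‖((a ^ (2 - 2*β) : ℝ) : ℂ) * g z₀ - ((b ^ (2 - 2*β) : ℝ) : ℂ) * g z₁‖
        ≤ a ^ (2-2*β) * ‖g z₀ - g z₁‖ + |a ^ (2-2*β) - b ^ (2-2*β)| * ‖g z₁‖ := by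
      have hdec : ((a ^ (2 - 2*β) : ℝ) : ℂ) * g z₀ - ((b ^ (2 - 2*β) : ℝ) : ℂ) * g z₁
          = ((a ^ (2 - 2*β) : ℝ) : ℂ) * (g z₀ - g z₁)
            + (((a ^ (2 - 2*β) - b ^ (2 - 2*β) : ℝ)) : ℂ) * g z₁ := by push_cast; ring
      rw [hdec]
      refine (norm_add_le _ _).trans ?_
      rw [norm_mul, norm_mul, Complex.norm_real, Complex.norm_real, Real.norm_eq_abs, Real.norm_eq_abs,
        abs_of_nonneg (Real.rpow_nonneg ha.le _)]
    -- Term 1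
    have hterm1 : a ^ (2-2*β) * ‖g z₀ - g z₁‖
        ≤ M * ε ^ (q - α) * (a ^ (α*(β-1)) * D ^ α) := by
      have h1 : a ^ (2-2*β) * ‖g z₀ - g z₁‖ ≤ a ^ (2-2*β) * (M * (ε*a) ^ (q-α) * D ^ α) := by
        apply mul_le_mul_of_nonneg_left _ (Real.rpow_nonneg ha.le _)
        calc ‖g z₀ - g z₁‖ ≤ H * D ^ α := hHd
          _ ≤ M * (ε*a) ^ (q-α) * D ^ α :=
              mul_le_mul_of_nonneg_right hHb (Real.rpow_nonneg hDpos.le _)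
      calc a ^ (2-2*β) * ‖g z₀ - g z₁‖
          ≤ a ^ (2-2*β) * (M * (ε*a) ^ (q-α) * D ^ α) := h1
        _ = M * ε ^ (q-α) * (a ^ (2-2*β) * a ^ (q-α) * D ^ α) := by
            rw [Real.mul_rpow hε₀.le ha.le]; ring
        _ = M * ε ^ (q-α) * (a ^ (α*(β-1)) * D ^ α) := by
            rw [← Real.rpow_add ha]
            congr 2
            rw [hq_def]; ring_nf
    -- Term 2
    have hrp : (1:ℝ) ≤ 2 - 2*β := by linarith
    have hrdiff : |a ^ (2-2*β) - b ^ (2-2*β)| ≤ 3 * a ^ (1-2*β) * D := by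
      have h1 := abs_rpow_sub_rpow_le ha.le hb.le hrp
      have hmx : max a b ≤ 3/2 * a := max_le (by linarith) hbub
      have hexp : 2 - 2*β - 1 = 1 - 2*β := by ring
      rw [hexp] at h1
      have h2 : max a b ^ (1-2*β) ≤ (3/2) * a ^ (1-2*β) := by
        calc max a b ^ (1-2*β) ≤ ((3/2)*a) ^ (1-2*β) :=
              Real.rpow_le_rpow (le_max_of_le_left ha.le) hmx (by linarith)
          _ = (3/2:ℝ) ^ (1-2*β) * a ^ (1-2*β) := Real.mul_rpow (by norm_num) ha.le
          _ ≤ (3/2:ℝ) ^ (1:ℝ) * a ^ (1-2*β) := by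
              apply mul_le_mul_of_nonneg_right
                (Real.rpow_le_rpow_of_exponent_le (by norm_num) (by linarith))
                (Real.rpow_nonneg ha.le _)
          _ = (3/2) * a ^ (1-2*β) := by rw [Real.rpow_one]
      calc |a ^ (2-2*β) - b ^ (2-2*β)| ≤ (2-2*β) * max a b ^ (1-2*β) * |a-b| := h1
        _ ≤ 2 * ((3/2) * a ^ (1-2*β)) * |a-b| := by
            have hmxn : 0 ≤ max a b ^ (1-2*β) := Real.rpow_nonneg (le_max_of_le_left ha.le) _
            gcongr
            linarith
        _ ≤ 2 * ((3/2) * a ^ (1-2*β)) * D := by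
            have han : 0 ≤ a ^ (1-2*β) := Real.rpow_nonneg ha.le _
            apply mul_le_mul_of_nonneg_left habd (by positivity)
        _ = 3 * a ^ (1-2*β) * D := by ring
    have hDa : D ≤ a := by
      have h2 : ε * a ≤ 1 * a := mul_le_mul_of_nonneg_right (by linarith) ha.le
      linarith
    have hmono : a ^ (1-2*β) * a ^ q * D ≤ a ^ (α*(β-1)) * D ^ α := by
      have hDsplit : D = D ^ (1-α) * D ^ α := by
        rw [← Real.rpow_add hDpos]; norm_num
      have hDle : D ^ (1-α) ≤ a ^ (1-α) := Real.rpow_le_rpow hDpos.le hDa (by linarith)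
      have e1 : a ^ (1-2*β) * a ^ q = a ^ (α*β-1) := by
        rw [← Real.rpow_add ha]; congr 1; rw [hq_def]; ring
      have e2 : a ^ (α*β-1) * a ^ (1-α) = a ^ (α*(β-1)) := by
        rw [← Real.rpow_add ha]; congr 1; ring
      calc a ^ (1-2*β) * a ^ q * D = a ^ (α*β-1) * (D ^ (1-α) * D ^ α) := by
            rw [e1, ← hDsplit]
        _ ≤ a ^ (α*β-1) * (a ^ (1-α) * D ^ α) := by
            apply mul_le_mul_of_nonneg_left _ (Real.rpow_nonneg ha.le _)
            exact mul_le_mul_of_nonneg_right hDle (Real.rpow_nonneg hDpos.le _)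
        _ = a ^ (α*(β-1)) * D ^ α := by rw [← mul_assoc, e2]
    have hterm2 : |a ^ (2-2*β) - b ^ (2-2*β)| * ‖g z₁‖
        ≤ 3 * M * ε ^ q * (a ^ (α*(β-1)) * D ^ α) := by
      have hSb' : S ≤ M * (ε ^ q * a ^ q) := by
        rwa [Real.mul_rpow hε₀.le ha.le] at hSb
      have hgb : ‖g z₁‖ ≤ M * (ε ^ q * a ^ q) := (hS z₁ hz₁).trans hSb'
      calc |a ^ (2-2*β) - b ^ (2-2*β)| * ‖g z₁‖
          ≤ (3 * a ^ (1-2*β) * D) * (M * (ε ^ q * a ^ q)) := by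
            apply mul_le_mul hrdiff hgb (norm_nonneg _)
            positivity
        _ = 3 * M * ε ^ q * (a ^ (1-2*β) * a ^ q * D) := by ring
        _ ≤ 3 * M * ε ^ q * (a ^ (α*(β-1)) * D ^ α) := by
            apply mul_le_mul_of_nonneg_left hmono
            positivity
    -- lower bound on RHS
    set Ξ := ‖((a ^ (β-1) : ℝ) : ℂ) * z₀ - ((b ^ (β-1) : ℝ) : ℂ) * z₁‖ with hΞ_def
    have hbil : a ^ (β-1) * D ≤ 3/(2*β) * Ξ := bilip hβ₀ hβ₁ hz₀ hz₁0 hbub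
    have hΞlow : (2*β/3) * (a ^ (β-1) * D) ≤ Ξ := by
      calc (2*β/3) * (a ^ (β-1) * D) ≤ (2*β/3) * (3/(2*β) * Ξ) :=
            mul_le_mul_of_nonneg_left hbil (by positivity)
        _ = Ξ := by field_simp
    have hΞpow : (2*β/3) * (a ^ (α*(β-1)) * D ^ α) ≤ Ξ ^ α := by
      have h0 : 0 ≤ (2*β/3) * (a ^ (β-1) * D) := by positivity
      have h1 : ((2*β/3) * (a ^ (β-1) * D)) ^ α ≤ Ξ ^ α :=
        Real.rpow_le_rpow h0 hΞlow hα₀.le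
      have h2 : ((2*β/3) * (a ^ (β-1) * D)) ^ α
          = (2*β/3 : ℝ) ^ α * (a ^ (α*(β-1)) * D ^ α) := by
        rw [Real.mul_rpow (by positivity) (by positivity),
          Real.mul_rpow (Real.rpow_nonneg ha.le _) hDpos.le, ← Real.rpow_mul ha.le]
        ring_nf
      have h3 : (2*β/3 : ℝ) ≤ (2*β/3 : ℝ) ^ α := by
        have := Real.rpow_le_rpow_of_exponent_ge (by positivity : (0:ℝ) < 2*β/3)
          (by linarith : (2*β/3 : ℝ) ≤ 1) hα₁.le
        rwa [Real.rpow_one] at this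
      have h4 : (2*β/3) * (a ^ (α*(β-1)) * D ^ α)
          ≤ (2*β/3 : ℝ) ^ α * (a ^ (α*(β-1)) * D ^ α) := by
        apply mul_le_mul_of_nonneg_right h3
        positivity
      calc (2*β/3) * (a ^ (α*(β-1)) * D ^ α)
          ≤ (2*β/3 : ℝ) ^ α * (a ^ (α*(β-1)) * D ^ α) := h4
        _ = ((2*β/3) * (a ^ (β-1) * D)) ^ α := h2.symm
        _ ≤ Ξ ^ α := h1
    -- combine
    have hLHS : ‖((a ^ (2 - 2*β) : ℝ) : ℂ) * g z₀ - ((b ^ (2 - 2*β) : ℝ) : ℂ) * g z₁‖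
        ≤ M * (ε ^ (q-α) + 3 * ε ^ q) * (a ^ (α*(β-1)) * D ^ α) := by
      calc ‖((a ^ (2 - 2*β) : ℝ) : ℂ) * g z₀ - ((b ^ (2 - 2*β) : ℝ) : ℂ) * g z₁‖
          ≤ a ^ (2-2*β) * ‖g z₀ - g z₁‖
            + |a ^ (2-2*β) - b ^ (2-2*β)| * ‖g z₁‖ := hsplit
        _ ≤ M * ε ^ (q-α) * (a ^ (α*(β-1)) * D ^ α)
            + 3 * M * ε ^ q * (a ^ (α*(β-1)) * D ^ α) := add_le_add hterm1 hterm2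
        _ = M * (ε ^ (q-α) + 3 * ε ^ q) * (a ^ (α*(β-1)) * D ^ α) := by ring
    have hRHS : M * (ε ^ (q-α) + 3 * ε ^ q) * (a ^ (α*(β-1)) * D ^ α)
        ≤ 3/(2*β) * (ε ^ (q-α) + 3 * ε ^ q) * M * Ξ ^ α := by
      have hCM : (0:ℝ) ≤ 3/(2*β) * (ε ^ (q-α) + 3 * ε ^ q) * M := by positivity
      have hone : 3/(2*β) * (2*β/3) = 1 := by
        field_simp
      calc M * (ε ^ (q-α) + 3 * ε ^ q) * (a ^ (α*(β-1)) * D ^ α)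
          = (3/(2*β) * (2*β/3)) * (M * (ε ^ (q-α) + 3 * ε ^ q) * (a ^ (α*(β-1)) * D ^ α)) := by
            rw [hone, one_mul]
        _ = (3/(2*β) * (ε ^ (q-α) + 3 * ε ^ q) * M) * ((2*β/3) * (a ^ (α*(β-1)) * D ^ α)) := by
            ring
        _ ≤ (3/(2*β) * (ε ^ (q-α) + 3 * ε ^ q) * M) * Ξ ^ α :=
            mul_le_mul_of_nonneg_left hΞpow hCM
        _ = 3/(2*β) * (ε ^ (q-α) + 3 * ε ^ q) * M * Ξ ^ α := by ring
    exact hLHS.trans hRHS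
end
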